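/- Anchor supported on rationalizable actions implies CH consistency: let p be an anchor with p_j(R^∞_j) = 1 for every player j, and f any full-support level distribution. Then for every player i and every order n ≥ 0 there exists a level k with C^n_{i,p,f}(θ_{i,k}) ⊆ R^n_i; in fact, for every k ≥ 1, C^k_{i,p,f}(θ_{i,k}) ⊆ R^∞_i ⊆ R^k_i. -/

import Mathlib

open Finset

/-- A probability distribution (as weights) on a finite set. -/
def IsDist {B : Type} [Fintype B] (ν : B → ℝ) : Prop :=
  (∀ b, 0 ≤ ν b) ∧ ∑ b, ν b = 1

/-- `a` is a best reply to the conjecture `ν` (weights on the co-player's actions). -/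
def isBR {A B : Type} [Fintype A] [Fintype B] (u : A → B → ℝ) (ν : B → ℝ) (a : A) : Prop :=
  ∀ a' : A, ∑ b, ν b * u a' b ≤ ∑ b, ν b * u a b

/-- `a` is strictly dominated by some mixed action. -/
def Dominated {A B : Type} [Fintype A] [Fintype B] (u : A → B → ℝ) (a : A) : Prop :=
  ∃ α : A → ℝ, IsDist α ∧ ∀ b : B, (∑ a', α a' * u a' b) > u a b

/-- One step of iterated elimination: best replies (within `S`) to conjectures on `T`. -/
def BRstep {A B : Type} [Fintype A] [Fintype B] (u : A → B → ℝ) (S : Set A) (T : Set B) :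
    Set A :=
  {a | a ∈ S ∧ ∃ ν : B → ℝ, IsDist ν ∧ (∀ b, ν b ≠ 0 → b ∈ T) ∧ isBR u ν a}

/-- `n`-rationalizability in the complete-information game. -/
def Rseq {A B : Type} [Fintype A] [Fintype B] (u1 : A → B → ℝ) (u2 : B → A → ℝ) :
    ℕ → Set A × Set B
  | 0 => (Set.univ, Set.univ)
  | n + 1 =>
    (BRstep u1 (Rseq u1 u2 n).1 (Rseq u1 u2 n).2,
     BRstep u2 (Rseq u1 u2 n).2 (Rseq u1 u2 n).1)

/-- Best replies to conjectures concentrated on `T`. -/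
def Lstep {A B : Type} [Fintype A] [Fintype B] (u : A → B → ℝ) (T : Set B) : Set A :=
  {a | ∃ ν : B → ℝ, IsDist ν ∧ (∀ b, ν b ≠ 0 → b ∈ T) ∧ isBR u ν a}

/-- The classic level-k solution under anchor `(p1, p2)`; `Lk … k` is level-`k` behavior
(meaningful for `k ≥ 1`). -/
def Lk {A B : Type} [Fintype A] [Fintype B] (u1 : A → B → ℝ) (u2 : B → A → ℝ)
    (p1 : A → ℝ) (p2 : B → ℝ) : ℕ → Set A × Set B
  | 0 => (Set.univ, Set.univ)
  | 1 => ({a | isBR u1 p2 a}, {b | isBR u2 p1 b})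
  | k + 2 =>
    (Lstep u1 (Lk u1 u2 p1 p2 (k + 1)).2,
     Lstep u2 (Lk u1 u2 p1 p2 (k + 1)).1)

/-- A Ĝ-conjecture over the co-player's (level-type, action) pairs: a finitely supported
type-marginal together with conditional action distributions. -/
structure GConj (B : Type) [Fintype B] where
  m : ℕ →₀ ℝ
  m_nonneg : ∀ t, 0 ≤ m t
  m_sum : (m.sum fun _ w => w) = 1
  cond : ℕ → B → ℝ
  cond_dist : ∀ t, IsDist (cond t)

/-- Marginal of a Ĝ-conjecture on the co-player's actions. -/
noncomputable def margAct {B : Type} [Fintype B] (μ : GConj B) : B → ℝ :=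
  fun b => μ.m.sum fun t w => w * μ.cond t b

/-- (K1): conditional on the co-player being of type 0 (if deemed possible),
play follows the anchor `q`. -/
def K1 {B : Type} [Fintype B] (q : B → ℝ) (μ : GConj B) : Prop :=
  μ.m 0 ≠ 0 → μ.cond 0 = q

/-- (K2): only co-player types strictly below `k` are deemed possible. -/
def K2 {B : Type} [Fintype B] (k : ℕ) (μ : GConj B) : Prop :=
  ∀ t, μ.m t ≠ 0 → t < k

/-- (KL): only the co-player type `k - 1` is deemed possible. -/
def KL {B : Type} [Fintype B] (k : ℕ) (μ : GConj B) : Prop :=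
  ∀ t, μ.m t ≠ 0 → t = k - 1

/-- Truncation `f^k` of the level distribution `f` at `k`. -/
noncomputable def ftrunc (f : ℕ → ℝ) (k t : ℕ) : ℝ :=
  f t / ∑ t' ∈ Finset.range k, f t'

/-- (KC): the type-marginal equals the truncation of `f` at `k`. -/
def KC {B : Type} [Fintype B] (f : ℕ → ℝ) (k : ℕ) (μ : GConj B) : Prop :=
  ∀ t < k, μ.m t = ftrunc f k t

/-- A full-support level distribution on ℕ. -/
def FullDist (f : ℕ → ℝ) : Prop :=
  (∀ t, 0 < f t) ∧ HasSum f 1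

/-- One step of Δ-rationalizability for one player, under belief restrictions `Δ`
(type-0 pairs always survive, since type-0 payoffs are constant). -/
def Dstep {A B : Type} [Fintype A] [Fintype B] (u : A → B → ℝ)
    (Δ : ℕ → GConj B → Prop) (S : Set (ℕ × A)) (T : Set (ℕ × B)) : Set (ℕ × A) :=
  {x | x ∈ S ∧ (x.1 = 0 ∨ ∃ μ : GConj B, Δ x.1 μ ∧
      (∀ t b, μ.m t ≠ 0 → μ.cond t b ≠ 0 → (t, b) ∈ T) ∧ isBR u (margAct μ) x.2)}

/-- Δ-rationalizability in the derived game with payoff uncertainty. -/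
def DeltaRat {A B : Type} [Fintype A] [Fintype B] (u1 : A → B → ℝ) (u2 : B → A → ℝ)
    (Δ1 : ℕ → GConj B → Prop) (Δ2 : ℕ → GConj A → Prop) :
    ℕ → Set (ℕ × A) × Set (ℕ × B)
  | 0 => (Set.univ, Set.univ)
  | n + 1 =>
    (Dstep u1 Δ1 (DeltaRat u1 u2 Δ1 Δ2 n).1 (DeltaRat u1 u2 Δ1 Δ2 n).2,
     Dstep u2 Δ2 (DeltaRat u1 u2 Δ1 Δ2 n).2 (DeltaRat u1 u2 Δ1 Δ2 n).1)

/-- Belief restrictions for downward rationalizability: (K1) and (K2). -/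
def DownR {B : Type} [Fintype B] (q : B → ℝ) : ℕ → GConj B → Prop :=
  fun k μ => K1 q μ ∧ K2 k μ

/-- Belief restrictions for L-rationalizability: (K1), (K2) and (KL). -/
def LR {B : Type} [Fintype B] (q : B → ℝ) : ℕ → GConj B → Prop :=
  fun k μ => K1 q μ ∧ K2 k μ ∧ KL k μ

/-- Belief restrictions for C-rationalizability: (K1), (K2) and (KC). -/
def CR {B : Type} [Fintype B] (q : B → ℝ) (f : ℕ → ℝ) : ℕ → GConj B → Prop :=
  fun k μ => K1 q μ ∧ K2 k μ ∧ KC f k μ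

section Sets

variable {A B : Type} [Fintype A] [Fintype B]

/-- `n`-downward-rationalizable actions of player 1's type `θ_{1,k}`. -/
def DSet (u1 : A → B → ℝ) (u2 : B → A → ℝ) (p1 : A → ℝ) (p2 : B → ℝ) (n k : ℕ) : Set A :=
  {a | (k, a) ∈ (DeltaRat u1 u2 (DownR p2) (DownR p1) n).1}

/-- `n`-downward-rationalizable actions of player 2's type `θ_{2,k}`. -/
def DSet2 (u1 : A → B → ℝ) (u2 : B → A → ℝ) (p1 : A → ℝ) (p2 : B → ℝ) (n k : ℕ) : Set B :=
  {b | (k, b) ∈ (DeltaRat u1 u2 (DownR p2) (DownR p1) n).2}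

def DSetInf (u1 : A → B → ℝ) (u2 : B → A → ℝ) (p1 : A → ℝ) (p2 : B → ℝ) (k : ℕ) : Set A :=
  ⋂ n, DSet u1 u2 p1 p2 n k

def DSet2Inf (u1 : A → B → ℝ) (u2 : B → A → ℝ) (p1 : A → ℝ) (p2 : B → ℝ) (k : ℕ) : Set B :=
  ⋂ n, DSet2 u1 u2 p1 p2 n k

/-- `n`-L-rationalizable actions of player 1's type `θ_{1,k}`. -/
def LSet (u1 : A → B → ℝ) (u2 : B → A → ℝ) (p1 : A → ℝ) (p2 : B → ℝ) (n k : ℕ) : Set A :=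
  {a | (k, a) ∈ (DeltaRat u1 u2 (LR p2) (LR p1) n).1}

/-- `n`-L-rationalizable actions of player 2's type `θ_{2,k}`. -/
def LSet2 (u1 : A → B → ℝ) (u2 : B → A → ℝ) (p1 : A → ℝ) (p2 : B → ℝ) (n k : ℕ) : Set B :=
  {b | (k, b) ∈ (DeltaRat u1 u2 (LR p2) (LR p1) n).2}

def LSetInf (u1 : A → B → ℝ) (u2 : B → A → ℝ) (p1 : A → ℝ) (p2 : B → ℝ) (k : ℕ) : Set A :=
  ⋂ n, LSet u1 u2 p1 p2 n k

def LSet2Inf (u1 : A → B → ℝ) (u2 : B → A → ℝ) (p1 : A → ℝ) (p2 : B → ℝ) (k : ℕ) : Set B :=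
  ⋂ n, LSet2 u1 u2 p1 p2 n k

/-- `n`-C-rationalizable actions of player 1's type `θ_{1,k}`. -/
def CSet (u1 : A → B → ℝ) (u2 : B → A → ℝ) (p1 : A → ℝ) (p2 : B → ℝ) (f : ℕ → ℝ)
    (n k : ℕ) : Set A :=
  {a | (k, a) ∈ (DeltaRat u1 u2 (CR p2 f) (CR p1 f) n).1}

/-- `n`-C-rationalizable actions of player 2's type `θ_{2,k}`. -/
def CSet2 (u1 : A → B → ℝ) (u2 : B → A → ℝ) (p1 : A → ℝ) (p2 : B → ℝ) (f : ℕ → ℝ)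
    (n k : ℕ) : Set B :=
  {b | (k, b) ∈ (DeltaRat u1 u2 (CR p2 f) (CR p1 f) n).2}

/-- The Cognitive Hierarchy solution: `CHsol … k` is CH level-`k` behavior (`k ≥ 1`). -/
def CHsol (u1 : A → B → ℝ) (u2 : B → A → ℝ) (p1 : A → ℝ) (p2 : B → ℝ) (f : ℕ → ℝ) :
    ℕ → Set A × Set B
  | 0 => (Set.univ, Set.univ)
  | 1 => ({a | isBR u1 p2 a}, {b | isBR u2 p1 b})
  | k + 2 =>
    ({a | ∃ μ : GConj B, K2 (k + 2) μ ∧ KC f (k + 2) μ ∧ K1 p2 μ ∧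
        (∀ t, 0 < t → ∀ _ : t < k + 2, ∀ b, μ.m t ≠ 0 → μ.cond t b ≠ 0 →
          b ∈ (CHsol u1 u2 p1 p2 f t).2) ∧
        isBR u1 (margAct μ) a},
     {b | ∃ μ : GConj A, K2 (k + 2) μ ∧ KC f (k + 2) μ ∧ K1 p1 μ ∧
        (∀ t, 0 < t → ∀ _ : t < k + 2, ∀ a, μ.m t ≠ 0 → μ.cond t a ≠ 0 →
          a ∈ (CHsol u1 u2 p1 p2 f t).1) ∧
        isBR u2 (margAct μ) b})
  termination_by k => k

end Sets

/-!
Rationalizability is stable under relabelling the players, so it suffices to treat player 1.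
The set `R^∞` of rationalizable actions contains every best reply to a conjecture concentrated
on the co-player's rationalizable actions. By induction on the order `n`, the surviving
actions of a type `θ_{1,k}` with `1 ≤ k ≤ n` are such best replies: by (K2) its conjecture
only involves co-player types `t < k`; type `0` plays the anchor, which is concentrated on
`R^∞`, and a type `1 ≤ t < k` plays `(n - 1)`-C-rationalizable actions, which lie in `R^∞`
by the induction hypothesis applied to the game with the players exchanged.
-/

section Consistency

variable {A B : Type} [Fintype A] [Fintype B]

theorem margAct_isDist (μ : GConj B) : IsDist (margAct μ) := by
  refine ⟨fun b => Finset.sum_nonneg fun t _ => mul_nonneg (μ.m_nonneg t) ((μ.cond_dist t).1 b),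
    ?_⟩
  calc ∑ b, margAct μ b = ∑ t ∈ μ.m.support, μ.m t * ∑ b, μ.cond t b := by
        simp only [margAct, Finsupp.sum, Finset.mul_sum]
        exact Finset.sum_comm
    _ = μ.m.sum fun _ w => w := by simp only [(μ.cond_dist _).2, mul_one, Finsupp.sum]
    _ = 1 := μ.m_sum

theorem margAct_ne_zero_mem {T : Set B} (μ : GConj B)
    (hT : ∀ t b, μ.m t ≠ 0 → μ.cond t b ≠ 0 → b ∈ T) (b : B) (hb : margAct μ b ≠ 0) :
    b ∈ T := by
  by_contra hbT
  refine hb (Finset.sum_eq_zero fun t ht => ?_)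
  have hmt : μ.m t ≠ 0 := Finsupp.mem_support_iff.mp ht
  have hcond : μ.cond t b = 0 := by_contra fun h => hbT (hT t b hmt h)
  simp only [hcond, mul_zero]

theorem Rseq_swap (u1 : A → B → ℝ) (u2 : B → A → ℝ) (n : ℕ) :
    Rseq u2 u1 n = (Rseq u1 u2 n).swap := by
  induction n with
  | zero => rfl
  | succ n ih => simp only [Rseq, ih, Prod.fst_swap, Prod.snd_swap, Prod.swap_prod_mk]

theorem DeltaRat_swap (u1 : A → B → ℝ) (u2 : B → A → ℝ) (Δ1 : ℕ → GConj B → Prop)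
    (Δ2 : ℕ → GConj A → Prop) (n : ℕ) :
    DeltaRat u2 u1 Δ2 Δ1 n = (DeltaRat u1 u2 Δ1 Δ2 n).swap := by
  induction n with
  | zero => rfl
  | succ n ih => simp only [DeltaRat, ih, Prod.fst_swap, Prod.snd_swap, Prod.swap_prod_mk]

theorem CSet2_eq_CSet_swap (u1 : A → B → ℝ) (u2 : B → A → ℝ) (p1 : A → ℝ) (p2 : B → ℝ)
    (f : ℕ → ℝ) (n k : ℕ) : CSet2 u1 u2 p1 p2 f n k = CSet u2 u1 p2 p1 f n k := by
  simp only [CSet2, CSet, DeltaRat_swap u1 u2, Prod.fst_swap]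

theorem Lstep_iInter_Rseq_subset (u1 : A → B → ℝ) (u2 : B → A → ℝ) :
    Lstep u1 (⋂ n, (Rseq u1 u2 n).2) ⊆ ⋂ n, (Rseq u1 u2 n).1 := by
  rintro a ⟨ν, hν, hsupp, hbr⟩
  refine Set.mem_iInter.mpr fun n => ?_
  induction n with
  | zero => trivial
  | succ n ih => exact ⟨ih, ν, hν, fun b hb => Set.mem_iInter.mp (hsupp b hb) n, hbr⟩

theorem CSet_subset_iInter_Rseq (u1 : A → B → ℝ) (u2 : B → A → ℝ) (p1 : A → ℝ) (p2 : B → ℝ)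
    (f : ℕ → ℝ) (hanc1 : ∀ a, p1 a ≠ 0 → ∀ n, a ∈ (Rseq u1 u2 n).1)
    (hanc2 : ∀ b, p2 b ≠ 0 → ∀ n, b ∈ (Rseq u1 u2 n).2) {n k : ℕ} (hk : 1 ≤ k) (hkn : k ≤ n) :
    CSet u1 u2 p1 p2 f n k ⊆ ⋂ m, (Rseq u1 u2 m).1 := by
  induction n generalizing A B k with
  | zero => omega
  | succ n ih =>
    rintro a ⟨-, hk0 | ⟨μ, ⟨hK1, hK2, -⟩, hsupp, hbr⟩⟩
    · omega
    refine Lstep_iInter_Rseq_subset u1 u2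
      ⟨margAct μ, margAct_isDist μ, margAct_ne_zero_mem μ fun t b hmt hcond => ?_, hbr⟩
    rcases Nat.eq_zero_or_pos t with rfl | ht
    · rw [hK1 hmt] at hcond
      exact Set.mem_iInter.mpr (hanc2 b hcond)
    · have hb : b ∈ CSet u2 u1 p2 p1 f n t := by
        rw [← CSet2_eq_CSet_swap]
        exact hsupp t b hmt hcond
      have hbR := ih u2 u1 p2 p1 (by simpa only [Rseq_swap u1 u2, Prod.fst_swap] using hanc2)
        (by simpa only [Rseq_swap u1 u2, Prod.snd_swap] using hanc1) ht
        (by have := hK2 t hmt; omega) hb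
      simpa only [Rseq_swap u1 u2, Prod.fst_swap] using hbR

theorem C_consistency_of_anchor_rationalizable (u1 : A → B → ℝ) (u2 : B → A → ℝ)
    (p1 : A → ℝ) (p2 : B → ℝ) (f : ℕ → ℝ)
    (hanc1 : ∀ a, p1 a ≠ 0 → ∀ n, a ∈ (Rseq u1 u2 n).1)
    (hanc2 : ∀ b, p2 b ≠ 0 → ∀ n, b ∈ (Rseq u1 u2 n).2) :
    (∀ n : ℕ, ∃ k : ℕ, CSet u1 u2 p1 p2 f n k ⊆ (Rseq u1 u2 n).1) ∧
    (∀ k : ℕ, 1 ≤ k →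
      CSet u1 u2 p1 p2 f k k ⊆ (⋂ n, (Rseq u1 u2 n).1) ∧
      (⋂ n, (Rseq u1 u2 n).1) ⊆ (Rseq u1 u2 k).1) := by
  have hself (k : ℕ) (hk : 1 ≤ k) : CSet u1 u2 p1 p2 f k k ⊆ ⋂ n, (Rseq u1 u2 n).1 :=
    CSet_subset_iInter_Rseq u1 u2 p1 p2 f hanc1 hanc2 hk le_rfl
  refine ⟨fun n => ?_, fun k hk => ⟨hself k hk, Set.iInter_subset _ k⟩⟩
  rcases n with _ | n
  · exact ⟨0, Set.subset_univ _⟩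
  · exact ⟨n + 1, (hself (n + 1) n.succ_pos).trans (Set.iInter_subset _ _)⟩

end Consistency

theorem C_consistency_rationalizable_anchor_general {A B : Type} [Fintype A] [Fintype B]
    (u1 : A → B → ℝ) (u2 : B → A → ℝ) (p1 : A → ℝ) (p2 : B → ℝ)
    (f : ℕ → ℝ)
    (hanc1 : ∀ a, p1 a ≠ 0 → ∀ n, a ∈ (Rseq u1 u2 n).1)
    (hanc2 : ∀ b, p2 b ≠ 0 → ∀ n, b ∈ (Rseq u1 u2 n).2) :
    ((∀ n : ℕ, ∃ k : ℕ, CSet u1 u2 p1 p2 f n k ⊆ (Rseq u1 u2 n).1) ∧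
     (∀ k : ℕ, 1 ≤ k →
        CSet u1 u2 p1 p2 f k k ⊆ (⋂ n, (Rseq u1 u2 n).1) ∧
        (⋂ n, (Rseq u1 u2 n).1) ⊆ (Rseq u1 u2 k).1)) ∧
    ((∀ n : ℕ, ∃ k : ℕ, CSet2 u1 u2 p1 p2 f n k ⊆ (Rseq u1 u2 n).2) ∧
     (∀ k : ℕ, 1 ≤ k →
        CSet2 u1 u2 p1 p2 f k k ⊆ (⋂ n, (Rseq u1 u2 n).2) ∧
        (⋂ n, (Rseq u1 u2 n).2) ⊆ (Rseq u1 u2 k).2)) := by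
  have hanc1' : ∀ a, p1 a ≠ 0 → ∀ n, a ∈ (Rseq u2 u1 n).2 := by
    simpa only [Rseq_swap u1 u2, Prod.snd_swap] using hanc1
  have hanc2' : ∀ b, p2 b ≠ 0 → ∀ n, b ∈ (Rseq u2 u1 n).1 := by
    simpa only [Rseq_swap u1 u2, Prod.fst_swap] using hanc2
  refine ⟨C_consistency_of_anchor_rationalizable u1 u2 p1 p2 f hanc1 hanc2, ?_⟩
  simpa only [CSet2_eq_CSet_swap, Rseq_swap u1 u2, Prod.fst_swap] using
    C_consistency_of_anchor_rationalizable u2 u1 p2 p1 f hanc2' hanc1'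

/-- if the anchor is supported on the rationalizable actions, then for
every order `n` some level is consistent; in fact for every `k ≥ 1` the
`k`-C-rationalizable actions of `θ_{i,k}` are rationalizable (hence `k`-rationalizable). -/
theorem C_consistency_rationalizable_anchor {A B : Type} [Fintype A] [Fintype B]
    (u1 : A → B → ℝ) (u2 : B → A → ℝ) (p1 : A → ℝ) (p2 : B → ℝ)
    (hp1 : IsDist p1) (hp2 : IsDist p2) (f : ℕ → ℝ) (hf : FullDist f)
    (hanc1 : ∀ a, p1 a ≠ 0 → ∀ n, a ∈ (Rseq u1 u2 n).1)
    (hanc2 : ∀ b, p2 b ≠ 0 → ∀ n, b ∈ (Rseq u1 u2 n).2) :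
    ((∀ n : ℕ, ∃ k : ℕ, CSet u1 u2 p1 p2 f n k ⊆ (Rseq u1 u2 n).1) ∧
     (∀ k : ℕ, 1 ≤ k →
        CSet u1 u2 p1 p2 f k k ⊆ (⋂ n, (Rseq u1 u2 n).1) ∧
        (⋂ n, (Rseq u1 u2 n).1) ⊆ (Rseq u1 u2 k).1)) ∧
    ((∀ n : ℕ, ∃ k : ℕ, CSet2 u1 u2 p1 p2 f n k ⊆ (Rseq u1 u2 n).2) ∧
     (∀ k : ℕ, 1 ≤ k →
        CSet2 u1 u2 p1 p2 f k k ⊆ (⋂ n, (Rseq u1 u2 n).2) ∧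
        (⋂ n, (Rseq u1 u2 n).2) ⊆ (Rseq u1 u2 k).2)) :=
  C_consistency_rationalizable_anchor_general u1 u2 p1 p2 f hanc1 hanc2
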